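/- Let S consist of 2n points given as n pairs {p_i, q_i} in a metric space, let T be a minimum spanning tree of S, let h be a maximum-weight edge of T, and let T_1, T_2 be the vertex sets of the two components of T after removing h. If some pair has both of its points in T_1 or both in T_2, then mstCost(S) ≤ 4 · min over all feasible colorings S = R ∪ B of max(mstCost(R), mstCost(B)). -/

import Mathlib

variable {α : Type*} [MetricSpace α] [DecidableEq α]

/-- Two points are connected via the edge set `E` (edges usable in both directions). -/
def EdgeConn (E : Finset (α × α)) (x y : α) : Prop :=
  Relation.ReflTransGen (fun a b => (a, b) ∈ E ∨ (b, a) ∈ E) x y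

/-- `E` is (the edge set of) a spanning tree of the complete graph on the finite
point set `X`. -/
def IsSpanningTreeOn (X : Finset α) (E : Finset (α × α)) : Prop :=
  (∀ e ∈ E, e.1 ∈ X ∧ e.2 ∈ X) ∧ E.card + 1 = X.card ∧
    ∀ x ∈ X, ∀ y ∈ X, EdgeConn E x y

/-- The minimum total edge length of a spanning tree on `X`. -/
noncomputable def mstCost (X : Finset α) : ℝ :=
  sInf {c | ∃ E : Finset (α × α), IsSpanningTreeOn X E ∧ c = ∑ e ∈ E, dist e.1 e.2}

/-!
Removing the heaviest edge `h` of a minimum spanning tree splits `S` into `T₁` and `T₂`, and by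
the cut property any two points on opposite sides are at distance at least `|h|`. Fix a feasible
coloring `S = R ∪ B`. The pair lying on one side, say in `T₁`, has one point of each colour and is
joined by a path of `T - h`; some edge of that path goes from `R` to `B`, so minimum spanning trees
of `R` and `B` joined by this edge give `mstCost S ≤ mstCost R + mstCost B + |h|`. A point of `T₂`
has the colour of one point of the pair, so the spanning trees of that colour class cross the cut
and `|h| ≤ max (mstCost R) (mstCost B)`. Hence even `mstCost S ≤ 3 · max (mstCost R) (mstCost B)`.
-/

open Finset

theorem Relation.ReflTransGen.exists_step_out {β : Type*} {r : β → β → Prop} {p : β → Prop}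
    {x y : β} (h : Relation.ReflTransGen r x y) (hx : p x) (hy : ¬ p y) :
    ∃ a b, r a b ∧ p a ∧ ¬ p b := by
  induction h with
  | refl => exact absurd hx hy
  | @tail b c _ hbc ih =>
    by_cases hb : p b
    · exact ⟨b, c, hbc, hb, hy⟩
    · exact ih hb

section Combinatorics

variable {β : Type*} {E F : Finset (β × β)} {X : Finset β} {a b x y z : β}

namespace EdgeConn

theorem of_mem (h : (x, y) ∈ E) : EdgeConn E x y :=
  Relation.ReflTransGen.single (Or.inl h)

theorem symm (h : EdgeConn E x y) : EdgeConn E y x :=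
  Relation.ReflTransGen.mono (fun _ _ => Or.symm) _ _ (Relation.ReflTransGen.swap _ _ h)

theorem trans (hxy : EdgeConn E x y) (hyz : EdgeConn E y z) : EdgeConn E x z :=
  Relation.ReflTransGen.trans hxy hyz

theorem mono (hEF : E ⊆ F) (h : EdgeConn E x y) : EdgeConn F x y :=
  Relation.ReflTransGen.mono (fun _ _ => Or.imp (@hEF _) (@hEF _)) _ _ h

end EdgeConn

theorem mem_and_mem_of_adj (hE : ∀ e ∈ E, e.1 ∈ X ∧ e.2 ∈ X) (hab : (a, b) ∈ E ∨ (b, a) ∈ E) :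
    a ∈ X ∧ b ∈ X :=
  hab.elim (hE _) fun h => (hE _ h).symm

theorem exists_isSpanningTreeOn (hX : X.Nonempty) : ∃ E : Finset (β × β), IsSpanningTreeOn X E := by
  classical
  obtain ⟨c, hc⟩ := hX
  have hconn : ∀ z ∈ X, EdgeConn ((X.erase c).image (c, ·)) c z := by
    intro z hz
    by_cases hzc : z = c
    · rw [hzc]
      exact Relation.ReflTransGen.refl
    · exact EdgeConn.of_mem (mem_image_of_mem _ (mem_erase.2 ⟨hzc, hz⟩))
  refine ⟨(X.erase c).image (c, ·), ?_, ?_, fun z hz w hw => (hconn z hz).symm.trans (hconn w hw)⟩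
  · simp only [forall_mem_image]
    exact fun z hz => ⟨hc, mem_of_mem_erase hz⟩
  · rw [card_image_of_injective _ (Prod.mk_right_injective c), card_erase_add_one hc]

theorem isSpanningTreeOn_insert [DecidableEq β] (hE : ∀ e ∈ E, e.1 ∈ X ∧ e.2 ∈ X) (hx : x ∈ X)
    (hy : y ∈ X) (hxy : (x, y) ∉ E) (hcard : E.card + 2 = X.card)
    (hconn : ∀ z ∈ X, EdgeConn E z x ∨ EdgeConn E z y) :
    IsSpanningTreeOn X (insert (x, y) E) := by
  have hsub : E ⊆ insert (x, y) E := subset_insert _ _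
  have to_x : ∀ z ∈ X, EdgeConn (insert (x, y) E) z x := fun z hz =>
    (hconn z hz).elim (EdgeConn.mono hsub) fun hzy =>
      (hzy.mono hsub).trans (EdgeConn.of_mem (mem_insert_self _ _)).symm
  refine ⟨?_, ?_, fun z hz w hw => (to_x z hz).trans (to_x w hw).symm⟩
  · exact (forall_mem_insert _ _ _).2 ⟨⟨hx, hy⟩, hE⟩
  · rw [card_insert_of_notMem hxy]
    omega

end Combinatorics

section Metric

variable {β : Type*} [MetricSpace β] {E : Finset (β × β)} {X : Finset β} {a b : β}

theorem exists_mem_dist_eq_of_adj (hab : (a, b) ∈ E ∨ (b, a) ∈ E) :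
    ∃ e ∈ E, dist e.1 e.2 = dist a b :=
  hab.elim (fun h => ⟨_, h, rfl⟩) fun h => ⟨_, h, dist_comm _ _⟩

theorem mstCost_nonneg (X : Finset β) : 0 ≤ mstCost X :=
  Real.sInf_nonneg fun _ ⟨_, _, hc⟩ => hc ▸ sum_nonneg fun _ _ => dist_nonneg

theorem mstCost_le (hE : IsSpanningTreeOn X E) : mstCost X ≤ ∑ e ∈ E, dist e.1 e.2 :=
  csInf_le ⟨0, fun _ ⟨_, _, hc⟩ => hc ▸ sum_nonneg fun _ _ => dist_nonneg⟩ ⟨E, hE, rfl⟩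

theorem exists_isSpanningTreeOn_sum_eq_mstCost (hX : X.Nonempty) :
    ∃ E : Finset (β × β), IsSpanningTreeOn X E ∧ ∑ e ∈ E, dist e.1 e.2 = mstCost X := by
  classical
  set costs := {c | ∃ E : Finset (β × β), IsSpanningTreeOn X E ∧ c = ∑ e ∈ E, dist e.1 e.2}
  have hne : costs.Nonempty :=
    let ⟨E, hE⟩ := exists_isSpanningTreeOn hX
    ⟨_, E, hE, rfl⟩
  -- the edges of a spanning tree on `X` lie in `X ×ˢ X`, so there are finitely many costs
  have hfin : costs.Finite := by
    refine ((X ×ˢ X).powerset.image fun E => ∑ e ∈ E, dist e.1 e.2).finite_toSet.subset ?_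
    rintro _ ⟨E, hE, rfl⟩
    exact mem_image_of_mem _ (mem_powerset.2 fun e he => mem_product.2 (hE.1 e he))
  obtain ⟨E, hE, hc⟩ := hne.csInf_mem hfin
  exact ⟨E, hE, hc.symm⟩

theorem le_mstCost_of_le_dist [DecidableEq β] {A C : Finset β} {d : ℝ} (hX : X ⊆ A ∪ C)
    (hd : ∀ a ∈ A, ∀ c ∈ C, d ≤ dist a c) {x y : β} (hx : x ∈ X) (hxA : x ∈ A) (hy : y ∈ X)
    (hyA : y ∉ A) : d ≤ mstCost X := by
  obtain ⟨E, hE, hcost⟩ := exists_isSpanningTreeOn_sum_eq_mstCost ⟨x, hx⟩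
  obtain ⟨a, b, hab, haA, hbA⟩ :=
    Relation.ReflTransGen.exists_step_out (p := (· ∈ A)) (hE.2.2 x hx y hy) hxA hyA
  have hbC : b ∈ C := (mem_union.1 (hX (mem_and_mem_of_adj hE.1 hab).2)).resolve_left hbA
  obtain ⟨e, he, hed⟩ := exists_mem_dist_eq_of_adj hab
  calc d ≤ dist a b := hd a haA b hbC
    _ = dist e.1 e.2 := hed.symm
    _ ≤ ∑ e ∈ E, dist e.1 e.2 :=
      single_le_sum (f := fun e => dist e.1 e.2) (fun _ _ => dist_nonneg) he
    _ = mstCost X := hcost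

theorem le_max_mstCost_of_le_dist [DecidableEq β] {R B A C : Finset β} {d : ℝ}
    (hRB : R ∪ B ⊆ A ∪ C) (hd : ∀ a ∈ A, ∀ c ∈ C, d ≤ dist a c) {u v s : β}
    (hu : u ∈ R) (huA : u ∈ A) (hv : v ∈ B) (hvA : v ∈ A) (hs : s ∈ R ∪ B) (hsA : s ∉ A) :
    d ≤ max (mstCost R) (mstCost B) := by
  rcases mem_union.1 hs with hs | hs
  · exact le_max_of_le_left (le_mstCost_of_le_dist (subset_union_left.trans hRB) hd hu huA hs hsA)
  · exact le_max_of_le_right (le_mstCost_of_le_dist (subset_union_right.trans hRB) hd hv hvA hs hsA)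

theorem exists_dist_le_of_edgeConn [DecidableEq β] {R B : Finset β} {d : ℝ}
    (hE : ∀ e ∈ E, e.1 ∈ R ∪ B ∧ e.2 ∈ R ∪ B) (hd : ∀ e ∈ E, dist e.1 e.2 ≤ d) {u v : β}
    (huv : EdgeConn E u v) (hu : u ∈ R) (hv : v ∉ R) : ∃ a ∈ R, ∃ b ∈ B, dist a b ≤ d := by
  obtain ⟨a, b, hab, haR, hbR⟩ := Relation.ReflTransGen.exists_step_out (p := (· ∈ R)) huv hu hv
  obtain ⟨e, he, hed⟩ := exists_mem_dist_eq_of_adj hab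
  exact ⟨a, haR, b, (mem_union.1 (mem_and_mem_of_adj hE hab).2).resolve_left hbR, hed ▸ hd e he⟩

theorem mstCost_union_le [DecidableEq β] {R B : Finset β} (hRB : Disjoint R B) (ha : a ∈ R)
    (hb : b ∈ B) : mstCost (R ∪ B) ≤ mstCost R + mstCost B + dist a b := by
  obtain ⟨ER, hER, hR⟩ := exists_isSpanningTreeOn_sum_eq_mstCost ⟨a, ha⟩
  obtain ⟨EB, hEB, hB⟩ := exists_isSpanningTreeOn_sum_eq_mstCost ⟨b, hb⟩
  have hE : Disjoint ER EB := disjoint_left.2 fun e heR heB =>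
    disjoint_left.1 hRB (hER.1 e heR).1 (hEB.1 e heB).1
  have hab : (a, b) ∉ ER ∪ EB := by
    rw [mem_union, not_or]
    exact ⟨fun h => disjoint_right.1 hRB hb (hER.1 _ h).2,
      fun h => disjoint_left.1 hRB ha (hEB.1 _ h).1⟩
  have htree : IsSpanningTreeOn (R ∪ B) (insert (a, b) (ER ∪ EB)) := by
    refine isSpanningTreeOn_insert ?_ (mem_union_left _ ha) (mem_union_right _ hb) hab ?_ ?_
    · intro e he
      rcases mem_union.1 he with he | he
      · exact (hER.1 e he).imp (mem_union_left _) (mem_union_left _)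
      · exact (hEB.1 e he).imp (mem_union_right _) (mem_union_right _)
    · rw [card_union_of_disjoint hE, card_union_of_disjoint hRB, ← hER.2.1, ← hEB.2.1]
      ring
    · intro z hz
      rcases mem_union.1 hz with hz | hz
      · exact Or.inl ((hER.2.2 z hz a ha).mono subset_union_left)
      · exact Or.inr ((hEB.2.2 z hz b hb).mono subset_union_right)
  calc mstCost (R ∪ B) ≤ ∑ e ∈ insert (a, b) (ER ∪ EB), dist e.1 e.2 := mstCost_le htree
    _ = mstCost R + mstCost B + dist a b := by
      rw [sum_insert hab, sum_union hE, hR, hB]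
      ring

end Metric

section MinimumSpanningTree

variable {β : Type*} [MetricSpace β] [DecidableEq β] {S T₁ T₂ : Finset β}
  {T : Finset (β × β)} {h : β × β}

/-- The cut property: replacing `h` by an edge across the cut gives another spanning tree. -/
theorem IsSpanningTreeOn.dist_le_of_cut (hT : IsSpanningTreeOn S T)
    (hTmin : ∑ e ∈ T, dist e.1 e.2 = mstCost S) (hh : h ∈ T) (hpart : T₁ ∪ T₂ = S)
    (hdisj : Disjoint T₁ T₂)
    (hcomp : ∀ x ∈ S, ∀ y ∈ S,
      EdgeConn (T.erase h) x y ↔ ((x ∈ T₁ ∧ y ∈ T₁) ∨ (x ∈ T₂ ∧ y ∈ T₂)))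
    {x y : β} (hx : x ∈ T₁) (hy : y ∈ T₂) : dist h.1 h.2 ≤ dist x y := by
  subst hpart
  have hxS := mem_union_left T₂ hx
  have hyS := mem_union_right T₁ hy
  have hxy : (x, y) ∉ T.erase h := fun hmem => by
    rcases (hcomp x hxS y hyS).1 (EdgeConn.of_mem hmem) with ⟨-, hy₁⟩ | ⟨hx₂, -⟩
    exacts [disjoint_left.1 hdisj hy₁ hy, disjoint_left.1 hdisj hx hx₂]
  have htree : IsSpanningTreeOn (T₁ ∪ T₂) (insert (x, y) (T.erase h)) := by
    refine isSpanningTreeOn_insert (fun e he => hT.1 e (mem_of_mem_erase he)) hxS hyS hxy ?_ ?_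
    · have := card_erase_add_one hh
      have := hT.2.1
      omega
    · intro z hz
      rcases mem_union.1 hz with hz₁ | hz₂
      · exact Or.inl ((hcomp z hz x hxS).2 (Or.inl ⟨hz₁, hx⟩))
      · exact Or.inr ((hcomp z hz y hyS).2 (Or.inr ⟨hz₂, hy⟩))
  have := mstCost_le htree
  rw [sum_insert hxy, sum_erase_eq_sub hh] at this
  linarith

theorem mstCost_le_three_mul_max (hT : IsSpanningTreeOn S T)
    (hTmin : ∑ e ∈ T, dist e.1 e.2 = mstCost S) (hh : h ∈ T)
    (hmax : ∀ e ∈ T, dist e.1 e.2 ≤ dist h.1 h.2) (hpart : T₁ ∪ T₂ = S) (hdisj : Disjoint T₁ T₂)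
    (hne₂ : T₂.Nonempty)
    (hcomp : ∀ x ∈ S, ∀ y ∈ S,
      EdgeConn (T.erase h) x y ↔ ((x ∈ T₁ ∧ y ∈ T₁) ∨ (x ∈ T₂ ∧ y ∈ T₂)))
    {R B : Finset β} (hRB : R ∪ B = S) (hRBd : Disjoint R B) {u v : β} (hu : u ∈ R) (hv : v ∈ B)
    (hu₁ : u ∈ T₁) (hv₁ : v ∈ T₁) : mstCost S ≤ 3 * max (mstCost R) (mstCost B) := by
  subst hRB
  obtain ⟨a, ha, b, hb, hab⟩ : ∃ a ∈ R, ∃ b ∈ B, dist a b ≤ dist h.1 h.2 :=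
    exists_dist_le_of_edgeConn (fun e he => hT.1 e (mem_of_mem_erase he))
      (fun e he => hmax e (mem_of_mem_erase he))
      ((hcomp u (mem_union_left _ hu) v (mem_union_right _ hv)).2 (Or.inl ⟨hu₁, hv₁⟩))
      hu (disjoint_right.1 hRBd hv)
  obtain ⟨s, hs⟩ := hne₂
  have hh_le : dist h.1 h.2 ≤ max (mstCost R) (mstCost B) :=
    le_max_mstCost_of_le_dist hpart.symm.subset
      (fun x hx y hy => hT.dist_le_of_cut hTmin hh hpart hdisj hcomp hx hy)
      hu hu₁ hv hv₁ (hpart ▸ mem_union_right _ hs) (disjoint_right.1 hdisj hs)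
  linarith [mstCost_union_le hRBd ha hb, le_max_left (mstCost R) (mstCost B),
    le_max_right (mstCost R) (mstCost B)]

end MinimumSpanningTree

section Coloring

variable {ι β : Type*} [Fintype ι] [DecidableEq β] (pts : ι × Bool → β) (σ : ι → Bool)

theorem image_color_union_image_color_not :
    univ.image (fun i => pts (i, σ i)) ∪ univ.image (fun i => pts (i, !σ i)) = univ.image pts := by
  ext x
  simp only [mem_union, mem_image, mem_univ, true_and, Prod.exists]
  constructor
  · rintro (⟨i, rfl⟩ | ⟨i, rfl⟩) <;> exact ⟨_, _, rfl⟩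
  · rintro ⟨i, c, rfl⟩
    rcases Bool.eq_or_eq_not c (σ i) with rfl | rfl
    exacts [Or.inl ⟨i, rfl⟩, Or.inr ⟨i, rfl⟩]

theorem disjoint_image_color_image_color_not (hinj : Function.Injective pts) :
    Disjoint (univ.image (fun i => pts (i, σ i))) (univ.image (fun i => pts (i, !σ i))) := by
  simp only [disjoint_left, mem_image, mem_univ, true_and, not_exists]
  rintro _ ⟨i, rfl⟩ j hj
  obtain ⟨rfl, hσ⟩ := Prod.ext_iff.1 (hinj hj)
  simp at hσ

end Coloring

theorem mst_total_bounded_by_minmax_opt_general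
    (n : ℕ)
    (pts : Fin n × Bool → α) (hinj : Function.Injective pts)
    (S : Finset α) (hS : S = Finset.image pts Finset.univ)
    (T : Finset (α × α)) (hT : IsSpanningTreeOn S T)
    (hTmin : (∑ e ∈ T, dist e.1 e.2) = mstCost S)
    (h : α × α) (hh : h ∈ T) (hmax : ∀ e ∈ T, dist e.1 e.2 ≤ dist h.1 h.2)
    (T₁ T₂ : Finset α) (hpart : T₁ ∪ T₂ = S) (hdisj : Disjoint T₁ T₂)
    (hne1 : T₁.Nonempty) (hne2 : T₂.Nonempty)
    (hcomp : ∀ x ∈ S, ∀ y ∈ S,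
      EdgeConn (T.erase h) x y ↔ ((x ∈ T₁ ∧ y ∈ T₁) ∨ (x ∈ T₂ ∧ y ∈ T₂)))
    (hpair : ∃ i : Fin n, (pts (i, false) ∈ T₁ ∧ pts (i, true) ∈ T₁) ∨
                          (pts (i, false) ∈ T₂ ∧ pts (i, true) ∈ T₂)) :
    mstCost S ≤ 4 *
      ⨅ σ : Fin n → Bool,
        max (mstCost (Finset.image (fun i => pts (i, σ i)) Finset.univ))
            (mstCost (Finset.image (fun i => pts (i, !(σ i))) Finset.univ)) := by
  set M : (Fin n → Bool) → ℝ := fun σ => max (mstCost (univ.image fun i => pts (i, σ i)))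
    (mstCost (univ.image fun i => pts (i, !σ i)))
  have key (σ : Fin n → Bool) : mstCost S ≤ 3 * M σ := by
    have hRB := hS ▸ image_color_union_image_color_not pts σ
    have hRBd := disjoint_image_color_image_color_not pts σ hinj
    have hu (i : Fin n) := mem_image_of_mem (fun i => pts (i, σ i)) (mem_univ i)
    have hv (i : Fin n) := mem_image_of_mem (fun i => pts (i, !σ i)) (mem_univ i)
    obtain ⟨i, hi | hi⟩ := hpair
    · have hA : ∀ c, pts (i, c) ∈ _ := Bool.forall_bool.2 hi
      exact mstCost_le_three_mul_max hT hTmin hh hmax hpart hdisj hne2 hcomp hRB hRBd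
        (hu i) (hv i) (hA _) (hA _)
    · have hA : ∀ c, pts (i, c) ∈ _ := Bool.forall_bool.2 hi
      exact mstCost_le_three_mul_max hT hTmin hh hmax (union_comm T₁ T₂ ▸ hpart) hdisj.symm hne1
        (fun x hx y hy => (hcomp x hx y hy).trans or_comm) hRB hRBd (hu i) (hv i) (hA _) (hA _)
  have hM_nonneg (σ : Fin n → Bool) : 0 ≤ M σ := le_max_of_le_left (mstCost_nonneg _)
  rw [← div_le_iff₀' (by norm_num)]
  exact le_ciInf fun σ => by linarith [key σ, hM_nonneg σ]

/-- `S` consists of `n` pairs `{pts (i, false), pts (i, true)}`. Let `T` be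
a minimum spanning tree of `S`, `h` a maximum-weight edge of `T`, and `T₁, T₂` the vertex
sets of the two components of `T` after removing `h`. If some pair has both of its points
in `T₁` or both in `T₂`, then
`mstCost S ≤ 4 · min over feasible colorings of max (mstCost R) (mstCost B)`. -/
theorem mst_total_bounded_by_minmax_opt
    (n : ℕ) (hn : 1 ≤ n)
    (pts : Fin n × Bool → α) (hinj : Function.Injective pts)
    (S : Finset α) (hS : S = Finset.image pts Finset.univ)
    (T : Finset (α × α)) (hT : IsSpanningTreeOn S T)
    (hTmin : (∑ e ∈ T, dist e.1 e.2) = mstCost S)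
    (h : α × α) (hh : h ∈ T) (hmax : ∀ e ∈ T, dist e.1 e.2 ≤ dist h.1 h.2)
    (T₁ T₂ : Finset α) (hpart : T₁ ∪ T₂ = S) (hdisj : Disjoint T₁ T₂)
    (hne1 : T₁.Nonempty) (hne2 : T₂.Nonempty)
    (hcomp : ∀ x ∈ S, ∀ y ∈ S,
      EdgeConn (T.erase h) x y ↔ ((x ∈ T₁ ∧ y ∈ T₁) ∨ (x ∈ T₂ ∧ y ∈ T₂)))
    (hpair : ∃ i : Fin n, (pts (i, false) ∈ T₁ ∧ pts (i, true) ∈ T₁) ∨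
                          (pts (i, false) ∈ T₂ ∧ pts (i, true) ∈ T₂)) :
    mstCost S ≤ 4 *
      ⨅ σ : Fin n → Bool,
        max (mstCost (Finset.image (fun i => pts (i, σ i)) Finset.univ))
            (mstCost (Finset.image (fun i => pts (i, !(σ i))) Finset.univ)) :=
  mst_total_bounded_by_minmax_opt_general n pts hinj S hS T hT hTmin h hh hmax T₁ T₂ hpart hdisj
    hne1 hne2 hcomp hpair
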